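/- arXiv:2307.05169 — 2 statements merged into one kernel-verified Lean document; each statement's English description precedes it below -/
import Mathlib

section
/- Let p be an odd prime and m, n₁ positive integers, and set n = 2^m·p^{n₁}. If n ≠ 6 then the girth of the unit graph G(Z_n) equals 4, and if n = 6 then the girth of G(Z_n) equals 6. -/
/-- The unit graph of `ZMod m`: distinct vertices `x, y` are adjacent iff `x + y` is a unit. -/
def unitGraph (m : ℕ) : SimpleGraph (ZMod m) where
  Adj x y := x ≠ y ∧ IsUnit (x + y)
  symm := by
    refine ⟨fun x y h => ?_⟩
    exact ⟨h.1.symm, by rw [add_comm]; exact h.2⟩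
  loopless := by
    refine ⟨fun x h => ?_⟩
    exact h.1 rfl

/-! For even `n` every unit of `ZMod n` is odd, so reduction mod 2 is a proper 2-colouring of
the unit graph: its cycles have even length, hence length at least 4. A 4-cycle `0, 1, z, -1`
exists as soon as `z ≠ 0` and `z ± 1` are units; for `n = 2 ^ m * p ^ n₁` take `z = 2` if
`p ≠ 3` and `z = 6` if `p = 3`, which is nonzero unless `n = 6`. For `n = 6` the units are `±1`,
a finite check rules out 4-cycles, and `0, 1, 4, 3, 2, 5` is a 6-cycle. -/

namespace SimpleGraph

variable {V : Type*} {G : SimpleGraph V}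

lemma girth_eq_of_egirth_eq {k : ℕ} (h : G.egirth = k) : G.girth = k := by
  simp [girth, h]

lemma Colorable.four_le_egirth (hG : G.Colorable 2) : 4 ≤ G.egirth := by
  refine le_egirth.mpr fun a w hw => ?_
  have := hw.three_le_length
  have := two_colorable_iff_forall_loop_even.mp hG a w
  norm_cast
  grind

lemma egirth_le_four {a b c d : V} (hab : G.Adj a b) (hbc : G.Adj b c) (hcd : G.Adj c d)
    (hda : G.Adj d a) (hac : a ≠ c) (hbd : b ≠ d) : G.egirth ≤ 4 :=
  egirth_le_length (w := .cons hab (.cons hbc (.cons hcd hda.toWalk))) <| by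
    simp [Walk.isCycle_def, hab.ne, hbc.ne, hcd.ne, hda.ne, hab.ne', hda.ne', hac, hbd,
      hac.symm]

lemma egirth_le_six {a b c d e f : V} (hab : G.Adj a b) (hbc : G.Adj b c) (hcd : G.Adj c d)
    (hde : G.Adj d e) (hef : G.Adj e f) (hfa : G.Adj f a) (hac : a ≠ c) (had : a ≠ d)
    (hae : a ≠ e) (hbd : b ≠ d) (hbe : b ≠ e) (hbf : b ≠ f) (hce : c ≠ e) (hcf : c ≠ f)
    (hdf : d ≠ f) : G.egirth ≤ 6 :=
  egirth_le_length
    (w := .cons hab (.cons hbc (.cons hcd (.cons hde (.cons hef hfa.toWalk))))) <| by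
    simp [Walk.isCycle_def, hab.ne, hbc.ne, hcd.ne, hde.ne, hef.ne, hfa.ne, hab.ne', hfa.ne', hac,
      had, hae, hbd, hbe, hbf, hce, hcf, hdf, hac.symm, had.symm, hae.symm]

lemma Walk.IsCycle.exists_adj_of_length_eq_four {a : V} {w : G.Walk a a} (hw : w.IsCycle)
    (h4 : w.length = 4) :
    ∃ b c d, G.Adj a b ∧ G.Adj b c ∧ G.Adj c d ∧ G.Adj d a ∧ a ≠ c ∧ b ≠ d := by
  match w, h4 with
  | .cons (v := b) hab (.cons (v := c) hbc (.cons (v := d) hcd (.cons hda .nil))), _ =>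
    have hsupp := hw.support_nodup
    simp only [Walk.support_cons, Walk.support_nil, List.tail_cons, List.nodup_cons,
      List.mem_cons] at hsupp
    exact ⟨b, c, d, hab, hbc, hcd, hda, by grind, by tauto⟩

end SimpleGraph

open SimpleGraph

lemma unitGraph_colorable_two {n : ℕ} (hn : 2 ∣ n) : (unitGraph n).Colorable 2 :=
  ⟨Coloring.mk (ZMod.castHom hn (ZMod 2)) fun {x y} hxy hcast => by
    have hunit := hxy.2.map (ZMod.castHom hn (ZMod 2))
    rw [map_add, hcast] at hunit
    revert hunit
    generalize ZMod.castHom hn (ZMod 2) y = t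
    revert t
    decide⟩

lemma unitGraph_six_egirth_le_six : (unitGraph 6).egirth ≤ 6 := by
  apply egirth_le_six (a := 0) (b := 1) (c := 4) (d := 3) (e := 2) (f := 5)
  all_goals first | decide | exact ⟨by decide, by decide⟩

lemma unitGraph_six_isCycle_length_ne_four {a : ZMod 6} {w : (unitGraph 6).Walk a a}
    (hw : w.IsCycle) : w.length ≠ 4 := fun hlen => by
  obtain ⟨b, c, d, hab, hbc, hcd, hda, hac, hbd⟩ := hw.exists_adj_of_length_eq_four hlen
  have hdegenerate : ∀ a b c d : ZMod 6, (unitGraph 6).Adj a b → (unitGraph 6).Adj b c →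
      (unitGraph 6).Adj c d → (unitGraph 6).Adj d a → a = c ∨ b = d := by
    unfold unitGraph
    decide
  exact (hdegenerate a b c d hab hbc hcd hda).elim hac hbd

lemma unitGraph_six_egirth : (unitGraph 6).egirth = 6 := by
  have hcol := unitGraph_colorable_two (n := 6) (by norm_num)
  refine le_antisymm unitGraph_six_egirth_le_six (le_egirth.mpr fun a w hw => ?_)
  have h4 : 4 ≤ w.length := by exact_mod_cast hcol.four_le_egirth.trans (egirth_le_length hw)
  have heven := two_colorable_iff_forall_loop_even.mp hcol a w
  have hne4 := unitGraph_six_isCycle_length_ne_four hw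
  norm_cast
  grind

lemma unitGraph_egirth_le_four {n : ℕ} {z : ZMod n} (h2 : (2 : ZMod n) ≠ 0) (hz : z ≠ 0)
    (hzp : IsUnit (z + 1)) (hzm : IsUnit (z - 1)) : (unitGraph n).egirth ≤ 4 := by
  have : Nontrivial (ZMod n) := nontrivial_of_ne _ _ h2
  have hz1 : z ≠ 1 := by rintro rfl; simp at hzm
  have hz1' : z ≠ -1 := by rintro rfl; simp at hzp
  refine egirth_le_four (a := 0) (b := 1) (c := z) (d := -1) ⟨zero_ne_one, by simp⟩
    ⟨hz1.symm, by rwa [add_comm]⟩ ⟨hz1', by rwa [← sub_eq_add_neg]⟩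
    ⟨neg_ne_zero.mpr one_ne_zero, by simp⟩ hz.symm fun h => h2 (by linear_combination h)

lemma isUnit_natCast_pow_mul_pow {a b k i j : ℕ} (ha : k.Coprime a) (hb : k.Coprime b) :
    IsUnit (k : ZMod (a ^ i * b ^ j)) :=
  (ZMod.isUnit_iff_coprime _ _).mpr ((ha.pow_right _).mul_right (hb.pow_right _))

lemma unitGraph_two_pow_mul_prime_pow_egirth_le_four {p m n₁ : ℕ} (hp : p.Prime)
    (hm : 0 < m) (hn₁ : 0 < n₁) (h6 : 2 ^ m * p ^ n₁ ≠ 6) :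
    (unitGraph (2 ^ m * p ^ n₁)).egirth ≤ 4 := by
  set n := 2 ^ m * p ^ n₁
  have hn : 4 ≤ n :=
    Nat.mul_le_mul (Nat.le_self_pow hm.ne' 2) (hp.two_le.trans (Nat.le_self_pow hn₁.ne' p))
  have hcast_ne_zero (k : ℕ) (hk : ¬n ∣ k) : (k : ZMod n) ≠ 0 :=
    (ZMod.natCast_eq_zero_iff k n).not.mpr hk
  have h2 : (2 : ZMod n) ≠ 0 := by
    exact_mod_cast hcast_ne_zero 2 fun h => by have := Nat.le_of_dvd two_pos h; omega
  by_cases hp3 : p = 3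
  · subst hp3
    have h6n : ¬n ∣ 6 := fun h =>
      h6 (Nat.dvd_antisymm h (mul_dvd_mul (dvd_pow_self 2 hm.ne') (dvd_pow_self 3 hn₁.ne')))
    refine unitGraph_egirth_le_four (z := ((6 : ℕ) : ZMod n)) h2 (hcast_ne_zero 6 h6n) ?_ ?_
    · exact_mod_cast isUnit_natCast_pow_mul_pow (k := 7) (by norm_num) (by norm_num)
    · rw [show ((6 : ℕ) : ZMod n) - 1 = ((5 : ℕ) : ZMod n) by push_cast; ring]
      exact isUnit_natCast_pow_mul_pow (by norm_num) (by norm_num)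
  · have h3p : Nat.Coprime 3 p := (Nat.coprime_primes Nat.prime_three hp).mpr (Ne.symm hp3)
    refine unitGraph_egirth_le_four (z := 2) h2 h2 ?_ (by norm_num)
    exact_mod_cast isUnit_natCast_pow_mul_pow (k := 3) (by norm_num) h3p

theorem unitGraph_twoPowTimesOddPrimePow_girth_general (p m n₁ : ℕ)
    (hp : p.Prime) (hm : 0 < m) (hn₁ : 0 < n₁) :
    (2 ^ m * p ^ n₁ ≠ 6 → (unitGraph (2 ^ m * p ^ n₁)).girth = 4) ∧
    (2 ^ m * p ^ n₁ = 6 → (unitGraph (2 ^ m * p ^ n₁)).girth = 6) := by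
  refine ⟨fun h6 => girth_eq_of_egirth_eq (le_antisymm ?_ ?_), fun h6 => ?_⟩
  · exact unitGraph_two_pow_mul_prime_pow_egirth_le_four hp hm hn₁ h6
  · have h2n : 2 ∣ 2 ^ m * p ^ n₁ := dvd_mul_of_dvd_left (dvd_pow_self 2 hm.ne') _
    exact (unitGraph_colorable_two h2n).four_le_egirth
  · rw [h6]
    exact girth_eq_of_egirth_eq unitGraph_six_egirth

theorem unitGraph_twoPowTimesOddPrimePow_girth (p m n₁ : ℕ)
    (hp : p.Prime) (hodd : Odd p) (hm : 0 < m) (hn₁ : 0 < n₁) :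
    (2 ^ m * p ^ n₁ ≠ 6 → (unitGraph (2 ^ m * p ^ n₁)).girth = 4) ∧
    (2 ^ m * p ^ n₁ = 6 → (unitGraph (2 ^ m * p ^ n₁)).girth = 6) :=
  unitGraph_twoPowTimesOddPrimePow_girth_general p m n₁ hp hm hn₁
end

section
/- Let n = p₁^{n₁}·p₂^{n₂}, where p₁, p₂ are distinct primes and n₁, n₂ are positive integers, and suppose 2 is a unit of Z/nZ. Let H be the incidence matrix of the unit graph G(Z_n) over F_2. Then the binary code C generated by the rows of H has length (n - 1)·φ(n)/2, dimension n - 1 over F_2, and minimum distance φ(n) - 1: every nonzero codeword of C has Hamming weight at least φ(n) - 1, and some codeword has Hamming weight exactly φ(n) - 1. -/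
open Classical in
/-- The linear code generated by the rows of the incidence matrix of `G` over `F`,
    viewed inside `F^E` where `E` is the edge set of `G`. -/
noncomputable def graphCode (F : Type*) [Field F] {V : Type*} (G : SimpleGraph V) :
    Submodule F (↥G.edgeSet → F) :=
  Submodule.span F (Set.range fun v : V => fun e : G.edgeSet => G.incMatrix F v ↑e)

open Finset

section General
variable {m : ℕ}

lemma unitGraph_adj {x y : ZMod m} : (unitGraph m).Adj x y ↔ x ≠ y ∧ IsUnit (x + y) := Iff.rfl

open Classical in
lemma incMatrix_unitGraph {a b v : ZMod m} (h : (unitGraph m).Adj a b) :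
    (unitGraph m).incMatrix (ZMod 2) v s(a, b)
      = (if v = a then 1 else 0) + (if v = b then 1 else 0) := by
  classical
  rw [SimpleGraph.incMatrix_apply, Set.indicator_apply]
  have hab : a ≠ b := h.1
  have he : s(a, b) ∈ (unitGraph m).edgeSet := h
  by_cases hva : v = a <;> by_cases hvb : v = b
  · exact absurd (hva ▸ hvb) hab
  · simp [SimpleGraph.incidenceSet, hva, hvb, he, Sym2.mem_iff, hab]
  · simp [SimpleGraph.incidenceSet, hva, hvb, he, Sym2.mem_iff, Ne.symm hab]
  · simp [SimpleGraph.incidenceSet, hva, hvb, Sym2.mem_iff]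

variable [NeZero m]

open Classical in
lemma sum_rows_apply (x : ZMod m → ZMod 2) {a b : ZMod m} (h : (unitGraph m).Adj a b) :
    ∑ v, x v * (unitGraph m).incMatrix (ZMod 2) v s(a, b) = x a + x b := by
  classical
  have : ∀ v, x v * (unitGraph m).incMatrix (ZMod 2) v s(a, b)
      = (if v = a then x a else 0) + (if v = b then x b else 0) := by
    intro v
    rw [incMatrix_unitGraph h]
    by_cases hva : v = a <;> by_cases hvb : v = b <;> simp [hva, hvb, mul_add, h.1, Ne.symm h.1]
  rw [Finset.sum_congr rfl fun v _ => this v, Finset.sum_add_distrib]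
  simp

end General
section General2
variable {m : ℕ} [NeZero m]

open Classical in
/-- The linear map sending a vector indexed by vertices to the corresponding
combination of rows of the incidence matrix. -/
noncomputable def rowMap (m : ℕ) [NeZero m] :
    (ZMod m → ZMod 2) →ₗ[ZMod 2] (↥(unitGraph m).edgeSet → ZMod 2) where
  toFun x := fun e => ∑ v, x v * (unitGraph m).incMatrix (ZMod 2) v ↑e
  map_add' x y := by
    funext e
    simp [add_mul, Finset.sum_add_distrib]
  map_smul' r x := by
    funext e
    simp [Finset.mul_sum, mul_assoc]

lemma range_rowMap : LinearMap.range (rowMap m) = graphCode (ZMod 2) (unitGraph m) := by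
  classical
  apply le_antisymm
  · rintro _ ⟨x, rfl⟩
    have : rowMap m x = ∑ v, x v •
        (fun e : ↥(unitGraph m).edgeSet => (unitGraph m).incMatrix (ZMod 2) v ↑e) := by
      funext e
      simp [rowMap, Finset.sum_apply]
    rw [this]
    exact Submodule.sum_mem _ fun v _ =>
      Submodule.smul_mem _ _ (Submodule.subset_span ⟨v, by funext e; simp only [SimpleGraph.incMatrix_apply]⟩)
  · rw [graphCode, Submodule.span_le]
    rintro _ ⟨v, rfl⟩
    refine ⟨Pi.single v 1, ?_⟩
    funext e
    simp [rowMap, Pi.single_apply, ite_mul, Finset.sum_ite_eq', SimpleGraph.incMatrix_apply]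

lemma mem_graphCode {c : ↥(unitGraph m).edgeSet → ZMod 2} :
    c ∈ graphCode (ZMod 2) (unitGraph m) ↔ ∃ x, rowMap m x = c := by
  rw [← range_rowMap]; rfl

lemma rowMap_apply (x : ZMod m → ZMod 2) {a b : ZMod m} (h : (unitGraph m).Adj a b) :
    rowMap m x ⟨s(a, b), h⟩ = x a + x b := by
  simpa [rowMap] using sum_rows_apply x h

lemma rowMap_const_one : rowMap m (fun _ => 1) = 0 := by
  funext e
  obtain ⟨e', he'⟩ := e
  induction e' with
  | _ a b =>
    have h : (unitGraph m).Adj a b := he'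
    have := rowMap_apply (m := m) (fun _ => 1) h
    simpa using this.trans (show (1 + 1 : ZMod 2) = 0 by decide)

end General2
section General3
variable {m : ℕ} [NeZero m]

lemma zmod2_add_eq_zero : ∀ r s : ZMod 2, r + s = 0 → r = s := by decide

lemma const_of_adj (hm : 2 ≤ m) (h2 : IsUnit (2 : ZMod m)) (x : ZMod m → ZMod 2)
    (hx : ∀ a b : ZMod m, (unitGraph m).Adj a b → x a = x b) :
    ∀ a : ZMod m, x a = x 0 := by
  haveI : Fact (1 < m) := ⟨hm⟩
  have key : ∀ u : ZMod m, IsUnit u → ∀ b : ZMod m, x b = x (u - b) := by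
    intro u hu b
    by_cases hb : b = u - b
    · rw [← hb]
    · exact hx b (u - b) ⟨hb, by rw [show b + (u - b) = u from by ring]; exact hu⟩
  have step : ∀ a : ZMod m, x a = x (a + 1) := by
    intro a
    by_cases ha : a = 0
    · subst ha
      simpa using hx 0 1 ⟨by simp, by simpa using isUnit_one⟩
    · have e1 : x a = x (1 - a) := key 1 isUnit_one a
      have e2 : x (1 - a) = x (2 - (1 - a)) := key 2 h2 (1 - a)
      rw [show (2 : ZMod m) - (1 - a) = a + 1 from by ring] at e2
      rw [e1, e2]
  have nat : ∀ k : ℕ, x (k : ZMod m) = x 0 := by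
    intro k
    induction k with
    | zero => simp
    | succ n ih => rw [Nat.cast_succ, ← step (n : ZMod m), ih]
  intro a
  obtain ⟨k, rfl⟩ := ZMod.natCast_rightInverse.surjective a
  exact nat k

lemma ker_rowMap (hm : 2 ≤ m) (h2 : IsUnit (2 : ZMod m)) :
    LinearMap.ker (rowMap m) = Submodule.span (ZMod 2) {fun _ => (1 : ZMod 2)} := by
  apply le_antisymm
  · intro x hx
    rw [LinearMap.mem_ker] at hx
    have hadj : ∀ a b : ZMod m, (unitGraph m).Adj a b → x a = x b := by
      intro a b h
      have := congrFun hx ⟨s(a, b), h⟩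
      rw [rowMap_apply x h] at this
      exact zmod2_add_eq_zero _ _ this
    have hconst := const_of_adj hm h2 x hadj
    rw [Submodule.mem_span_singleton]
    exact ⟨x 0, by funext a; simp [hconst a]⟩
  · rw [Submodule.span_le, Set.singleton_subset_iff]
    exact rowMap_const_one

lemma finrank_graphCode (hm : 2 ≤ m) (h2 : IsUnit (2 : ZMod m)) :
    Module.finrank (ZMod 2) ↥(graphCode (ZMod 2) (unitGraph m)) = m - 1 := by
  rw [← range_rowMap]
  have h := LinearMap.finrank_range_add_finrank_ker (rowMap m)
  have hone : (fun _ => (1 : ZMod 2)) ≠ (0 : ZMod m → ZMod 2) := by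
    intro h0
    simpa using congrFun h0 0
  rw [ker_rowMap hm h2, finrank_span_singleton hone, Module.finrank_pi, ZMod.card] at h
  omega

end General3
section General4
variable {m : ℕ} [NeZero m]

/-- units of a finite monoid as a subtype equiv. -/
noncomputable def unitsEquivIsUnit' : (ZMod m)ˣ ≃ {u : ZMod m // IsUnit u} where
  toFun u := ⟨(u : ZMod m), u.isUnit⟩
  invFun s := s.2.unit
  left_inv u := Units.ext u.isUnit.unit_spec
  right_inv s := Subtype.ext s.2.unit_spec

lemma card_units_filter [DecidablePred fun u : ZMod m => IsUnit u] :
    (univ.filter fun u : ZMod m => IsUnit u).card = m.totient := by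
  rw [← ZMod.card_units_eq_totient m, Fintype.card_congr (unitsEquivIsUnit' (m := m)),
    Fintype.card_subtype]

lemma isUnit_two_mul_iff (h2 : IsUnit (2 : ZMod m)) (v : ZMod m) :
    IsUnit (2 * v) ↔ IsUnit v :=
  ⟨fun h => isUnit_of_mul_isUnit_right h, fun h => h2.mul h⟩

lemma neighborFinset_unitGraph [DecidableRel (unitGraph m).Adj]
    [DecidablePred fun u : ZMod m => IsUnit u] (v : ZMod m) :
    (unitGraph m).neighborFinset v
      = ((univ.filter fun u : ZMod m => IsUnit u).image (· - v)).erase v := by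
  ext y
  simp only [SimpleGraph.mem_neighborFinset, Finset.mem_erase, Finset.mem_image,
    Finset.mem_filter, Finset.mem_univ, true_and]
  constructor
  · rintro ⟨hne, hu⟩
    exact ⟨Ne.symm hne, v + y, hu, by ring⟩
  · rintro ⟨hne, u, hu, rfl⟩
    exact ⟨Ne.symm hne, by rwa [show v + (u - v) = u from by ring]⟩

lemma degree_unitGraph [DecidableRel (unitGraph m).Adj]
    [DecidablePred fun u : ZMod m => IsUnit u]
    (h2 : IsUnit (2 : ZMod m)) (v : ZMod m) :
    (unitGraph m).degree v + (if IsUnit v then 1 else 0) = m.totient := by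
  rw [← SimpleGraph.card_neighborFinset_eq_degree, neighborFinset_unitGraph v]
  have hinj : Function.Injective (· - v) := sub_left_injective
  have hcard : ((univ.filter fun u : ZMod m => IsUnit u).image (· - v)).card = m.totient := by
    rw [Finset.card_image_of_injective _ hinj, card_units_filter]
  have hmem : v ∈ (univ.filter fun u : ZMod m => IsUnit u).image (· - v) ↔ IsUnit v := by
    simp only [Finset.mem_image, Finset.mem_filter, Finset.mem_univ, true_and]
    constructor
    · rintro ⟨u, hu, hv⟩
      rw [← isUnit_two_mul_iff h2]
      rwa [show (2 : ZMod m) * v = u from (two_mul v).trans (sub_eq_iff_eq_add.mp hv).symm]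
    · intro hv
      exact ⟨2 * v, (isUnit_two_mul_iff h2 v).mpr hv, by ring⟩
  by_cases hv : IsUnit v
  · rw [Finset.card_erase_of_mem (hmem.mpr hv), hcard, if_pos hv]
    have : 1 ≤ m.totient := Nat.totient_pos.mpr (NeZero.pos m)
    omega
  · rw [Finset.erase_eq_of_notMem (fun hc => hv (hmem.mp hc)), hcard, if_neg hv]
    omega

lemma card_edges_unitGraph (h2 : IsUnit (2 : ZMod m)) :
    Nat.card ↥(unitGraph m).edgeSet = (m - 1) * m.totient / 2 := by
  classical
  rw [Nat.card_eq_fintype_card, ← SimpleGraph.edgeFinset_card]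
  have hsum := SimpleGraph.sum_degrees_eq_twice_card_edges (unitGraph m)
  have hdeg : ∀ v : ZMod m, (unitGraph m).degree v + (if IsUnit v then 1 else 0) = m.totient :=
    degree_unitGraph h2
  have h1 : ∑ v : ZMod m, ((unitGraph m).degree v + (if IsUnit v then 1 else 0))
      = m * m.totient := by
    rw [Finset.sum_congr rfl fun v _ => hdeg v]
    simp [ZMod.card, mul_comm]
  rw [Finset.sum_add_distrib, hsum] at h1
  have h2' : (∑ v : ZMod m, if IsUnit v then 1 else 0) = m.totient := by
    rw [← Finset.card_filter]
    exact card_units_filter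
  rw [h2'] at h1
  have h3 : 2 * (unitGraph m).edgeFinset.card = (m - 1) * m.totient := by
    rw [Nat.sub_one_mul]
    omega
  omega
end General4
section General5
variable {m : ℕ} [NeZero m]

lemma exists_min_codeword (h2 : IsUnit (2 : ZMod m)) :
    ∃ c ∈ graphCode (ZMod 2) (unitGraph m),
      {e | c e ≠ 0}.ncard = m.totient - 1 := by
  classical
  refine ⟨fun e => (unitGraph m).incMatrix (ZMod 2) 1 ↑e,
    Submodule.subset_span ⟨1, by funext e; simp only [SimpleGraph.incMatrix_apply]⟩, ?_⟩
  rw [Set.ncard_eq_toFinset_card', Set.toFinset_setOf]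
  show (univ.filter fun e : ↥(unitGraph m).edgeSet =>
      (unitGraph m).incMatrix (ZMod 2) 1 ↑e ≠ 0).card = m.totient - 1
  have hdeg := degree_unitGraph (m := m) h2 1
  rw [if_pos isUnit_one] at hdeg
  have hcard : (univ.filter fun e : ↥(unitGraph m).edgeSet =>
      (unitGraph m).incMatrix (ZMod 2) 1 ↑e ≠ 0).card = (unitGraph m).degree 1 := by
    rw [← SimpleGraph.card_neighborFinset_eq_degree]
    symm
    refine Finset.card_bij (fun b hb => ⟨s(1, b),
      (SimpleGraph.mem_neighborFinset _ _ _).mp hb⟩) ?_ ?_ ?_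
    · intro b hb
      rw [SimpleGraph.mem_neighborFinset] at hb
      simp only [Finset.mem_filter, Finset.mem_univ, true_and]
      rw [incMatrix_unitGraph hb, if_pos rfl, if_neg hb.1]
      decide
    · intro b hb b' hb' hbb
      rw [SimpleGraph.mem_neighborFinset] at hb hb'
      have := Subtype.ext_iff.mp hbb
      rw [Sym2.eq_iff] at this
      rcases this with ⟨-, h⟩ | ⟨h1, h2'⟩
      · exact h
      · exact absurd h1 hb'.1
    · rintro ⟨e, he⟩ hmem
      rw [Finset.mem_filter] at hmem
      have h1e : (1 : ZMod m) ∈ e := by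
        by_contra hc
        have : (unitGraph m).incMatrix (ZMod 2) 1 e = 0 := by
          rw [SimpleGraph.incMatrix_apply, Set.indicator_of_notMem]
          intro hmem'
          exact hc hmem'.2
        exact hmem.2 this
      induction e with
      | _ a b =>
        have hab : (unitGraph m).Adj a b := he
        rw [Sym2.mem_iff] at h1e
        rcases h1e with rfl | rfl
        · exact ⟨b, (SimpleGraph.mem_neighborFinset _ _ _).mpr hab, rfl⟩
        · refine ⟨a, (SimpleGraph.mem_neighborFinset _ _ _).mpr hab.symm, ?_⟩
          exact Subtype.ext (Sym2.eq_swap)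
  omega

end General5
section General6
variable {m : ℕ} [NeZero m]

/-- The stabilizer of a finset of `ZMod m` under translation. -/
def stabF (S : Finset (ZMod m)) : AddSubgroup (ZMod m) where
  carrier := {t | ∀ a : ZMod m, a ∈ S ↔ a + t ∈ S}
  zero_mem' := by intro a; simp
  add_mem' := by
    intro t t' ht ht' a
    rw [ht a, ht' (a + t), add_assoc]
  neg_mem' := by
    intro t ht a
    have h := ht (a + -t)
    rw [show a + -t + t = a from by ring] at h
    exact h.symm

lemma mem_stabF {S : Finset (ZMod m)} {t : ZMod m} :
    t ∈ stabF S ↔ ∀ a : ZMod m, a ∈ S ↔ a + t ∈ S := Iff.rfl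

lemma min_weight (h2 : IsUnit (2 : ZMod m))
    (hdiv : ∀ d : ℕ, d ∣ m → d ≠ m → d < m.totient) :
    ∀ c ∈ graphCode (ZMod 2) (unitGraph m), c ≠ 0 →
      m.totient - 1 ≤ {e | c e ≠ 0}.ncard := by
  classical
  intro c hc hc0
  obtain ⟨x, rfl⟩ := mem_graphCode.mp hc
  set S : Finset (ZMod m) := univ.filter (fun v => x v = 1) with hS
  have hq : ∀ r : ZMod 2, r = 1 ∨ r = 0 := by decide
  have hxS : ∀ v, v ∈ S ↔ x v = 1 := by intro v; simp [hS]
  have hxS' : ∀ v, v ∉ S ↔ x v = 0 := by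
    intro v
    rw [hxS]
    rcases hq (x v) with h | h <;> simp [h]
  have hSne : S.Nonempty := by
    rw [Finset.nonempty_iff_ne_empty]
    intro h0
    apply hc0
    have hx0 : x = 0 := by
      funext v
      have : v ∉ S := by rw [h0]; exact Finset.notMem_empty v
      simpa using (hxS' v).mp this
    rw [hx0, map_zero]
  have hSuniv : S ≠ univ := by
    intro h0
    apply hc0
    have hx1 : x = fun _ => 1 := by
      funext v
      exact (hxS v).mp (by rw [h0]; exact Finset.mem_univ v)
    rw [hx1, rowMap_const_one]
  obtain ⟨y₀, hy₀⟩ : ∃ y, y ∉ S := by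
    by_contra hno
    push_neg at hno
    exact hSuniv (Finset.eq_univ_iff_forall.mpr hno)
  obtain ⟨s₀, hs₀⟩ := hSne
  set U : Finset (ZMod m) := univ.filter (fun u : ZMod m => IsUnit u) with hUdef
  have hU : U.card = m.totient := card_units_filter
  set F : ZMod m → Finset (ZMod m) := fun u => S.filter (fun a => u - a ∉ S) with hF
  have hFmem : ∀ u a : ZMod m, a ∈ F u ↔ a ∈ S ∧ u - a ∉ S := by
    intro u a; rw [hF]; exact Finset.mem_filter
  rw [Set.ncard_eq_toFinset_card', Set.toFinset_setOf]
  set D : Finset ↥(unitGraph m).edgeSet := univ.filter (fun e => rowMap m x e ≠ 0) with hD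
  show m.totient - 1 ≤ D.card
  have hDcard : D.card = ∑ u ∈ U, (F u).card := by
    rw [← Finset.card_sigma]
    have hadj : ∀ (p : (_ : ZMod m) × ZMod m), p ∈ U.sigma F →
        (unitGraph m).Adj p.2 (p.1 - p.2) := by
      intro p hp
      rw [Finset.mem_sigma] at hp
      obtain ⟨hpU, hpF⟩ := hp
      rw [hUdef, Finset.mem_filter] at hpU
      rw [hFmem] at hpF
      refine ⟨fun hcon => hpF.2 (hcon ▸ hpF.1), ?_⟩
      rw [show p.2 + (p.1 - p.2) = p.1 from by ring]
      exact hpU.2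
    refine (Finset.card_bij
      (fun p hp => (⟨s(p.2, p.1 - p.2), (unitGraph m).mem_edgeSet.mpr (hadj p hp)⟩ : ↥(unitGraph m).edgeSet)) ?_ ?_ ?_).symm
    · intro p hp
      have h := hadj p hp
      rw [Finset.mem_sigma, hFmem] at hp
      have h1 : x p.2 = 1 := (hxS _).mp hp.2.1
      have h0 : x (p.1 - p.2) = 0 := (hxS' _).mp hp.2.2
      rw [hD, Finset.mem_filter]
      refine ⟨Finset.mem_univ _, ?_⟩
      rw [rowMap_apply x h, h1, h0]
      decide
    · intro p hp q hq hpq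
      rw [Finset.mem_sigma, hFmem] at hp hq
      have heq := Subtype.ext_iff.mp hpq
      simp only at heq
      rw [Sym2.eq_iff] at heq
      rcases heq with ⟨h1, h2'⟩ | ⟨h1, h2'⟩
      · have hfst : p.1 = q.1 := by
          rw [h1] at h2'
          exact sub_left_inj.mp h2'
        exact Sigma.ext hfst (heq_of_eq h1)
      · exfalso
        exact hq.2.2 (h1 ▸ hp.2.1)
    · rintro ⟨e, he⟩ hDe
      induction e with
      | _ a b =>
        have hab : (unitGraph m).Adj a b := he
        rw [hD, Finset.mem_filter] at hDe
        have hval := hDe.2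
        rw [show (⟨s(a, b), he⟩ : ↥(unitGraph m).edgeSet) = ⟨s(a, b), hab⟩ from rfl,
          rowMap_apply x hab] at hval
        rcases hq (x a) with ha | ha <;> rcases hq (x b) with hb | hb
        · exfalso; rw [ha, hb] at hval; exact hval (by decide)
        · refine ⟨⟨a + b, a⟩, ?_, ?_⟩
          · rw [Finset.mem_sigma, hFmem]
            refine ⟨?_, (hxS a).mpr ha, ?_⟩
            · rw [hUdef, Finset.mem_filter]; exact ⟨Finset.mem_univ _, hab.2⟩
            · rw [show a + b - a = b from by ring]
              exact (hxS' b).mpr hb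
          · apply Subtype.ext
            simp only
            rw [show a + b - a = b from by ring]
        · refine ⟨⟨a + b, b⟩, ?_, ?_⟩
          · rw [Finset.mem_sigma, hFmem]
            refine ⟨?_, (hxS b).mpr hb, ?_⟩
            · rw [hUdef, Finset.mem_filter]
              refine ⟨Finset.mem_univ _, ?_⟩
              have h' := hab.2
              exact h'
            · rw [show a + b - b = a from by ring]
              exact (hxS' a).mpr ha
          · apply Subtype.ext
            simp only
            rw [show a + b - b = a from by ring]
            exact Sym2.eq_swap
        · exfalso; rw [ha, hb] at hval; exact hval (by decide)
  rw [hDcard]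
  set B : Finset (ZMod m) := U.filter (fun u => F u = ∅) with hB
  have hBU : B ⊆ U := Finset.filter_subset _ _
  have hFne : ∀ u ∈ U, u ∉ B → (F u).Nonempty := by
    intro u hu hub
    rw [Finset.nonempty_iff_ne_empty]
    intro h0
    exact hub (by rw [hB]; exact Finset.mem_filter.mpr ⟨hu, h0⟩)
  have hBiff : ∀ u ∈ B, ∀ a : ZMod m, a ∈ S ↔ u - a ∈ S := by
    intro u hub a
    have hforward : ∀ b : ZMod m, b ∈ S → u - b ∈ S := by
      intro b hbS
      by_contra hcon
      have hbF : b ∈ F u := (hFmem u b).mpr ⟨hbS, hcon⟩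
      rw [hB] at hub
      rw [(Finset.mem_filter.mp hub).2] at hbF
      exact absurd hbF (Finset.notMem_empty b)
    constructor
    · exact hforward a
    · intro h
      have h' := hforward _ h
      rwa [show u - (u - a) = a from by ring] at h'
  have hsub_mem : ∀ u ∈ B, ∀ u' ∈ B, u - u' ∈ stabF S := by
    intro u hu u' hu'
    rw [mem_stabF]
    intro a
    rw [hBiff u' hu' a, hBiff u hu (u' - a), show u - (u' - a) = a + (u - u') from by ring]
  by_cases hBc : B.card ≤ 1
  · calc m.totient - 1 ≤ (U \ B).card := by
          rw [Finset.card_sdiff_of_subset hBU, hU]; omega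
      _ = ∑ _u ∈ U \ B, 1 := by simp
      _ ≤ ∑ u ∈ U \ B, (F u).card := Finset.sum_le_sum (fun u hu => by
          rw [Finset.mem_sdiff] at hu
          exact Finset.card_pos.mpr (hFne u hu.1 hu.2))
      _ ≤ ∑ u ∈ U, (F u).card := Finset.sum_le_sum_of_subset Finset.sdiff_subset
  · push_neg at hBc
    obtain ⟨u, hu, u', hu', huu'⟩ := Finset.one_lt_card.mp hBc
    have htmem : u - u' ∈ stabF S := hsub_mem u hu u' hu'
    have htne : u - u' ≠ 0 := sub_ne_zero.mpr huu'
    have hH2 : 2 ≤ Nat.card (stabF S) := by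
      have hnt : Nontrivial (stabF S) := ⟨⟨0, zero_mem _⟩, ⟨u - u', htmem⟩, by
        intro hcon
        exact htne (Subtype.ext_iff.mp hcon).symm⟩
      have h1 := Nat.card_eq_fintype_card (α := ↥(stabF S)) ▸
        Fintype.one_lt_card_iff_nontrivial.mpr hnt
      omega
    have hhdvd : Nat.card (stabF S) ∣ m := by
      have := AddSubgroup.card_addSubgroup_dvd_card (stabF S)
      simpa [Nat.card_eq_fintype_card, ZMod.card] using this
    have hhne : Nat.card (stabF S) ≠ m := by
      intro hcon
      have htop : stabF S = ⊤ := AddSubgroup.eq_top_of_card_eq _ (by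
        rw [hcon, Nat.card_zmod])
      have hmem : (y₀ - s₀ : ZMod m) ∈ stabF S := by
        rw [htop]; exact AddSubgroup.mem_top _
      rw [mem_stabF] at hmem
      have := (hmem s₀).mp hs₀
      rw [show s₀ + (y₀ - s₀) = y₀ from by ring] at this
      exact hy₀ this
    have hhlt : Nat.card (stabF S) < m.totient := hdiv _ hhdvd hhne
    have hHcard : (((stabF S) : Set (ZMod m)).toFinset).card = Nat.card (stabF S) := by
      rw [Set.toFinset_card, Nat.card_eq_fintype_card]
      exact Fintype.card_congr (Equiv.refl _)
    have hBh : B.card ≤ Nat.card (stabF S) := by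
      rw [← hHcard]
      apply Finset.card_le_card_of_injOn (fun b => b - u')
      · intro b hb
        rw [Finset.mem_coe, Set.mem_toFinset]
        exact hsub_mem b hb u' hu'
      · intro b1 _ b2 _ hb
        exact sub_left_inj.mp hb
    have hFh : ∀ w ∈ U, w ∉ B → Nat.card (stabF S) ≤ (F w).card := by
      intro w hw hwB
      obtain ⟨a₀, ha₀⟩ := hFne w hw hwB
      rw [hFmem] at ha₀
      rw [← hHcard]
      apply Finset.card_le_card_of_injOn (fun t => a₀ + t)
      · intro t ht
        rw [Finset.mem_coe, Set.mem_toFinset, SetLike.mem_coe, mem_stabF] at ht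
        rw [Finset.mem_coe, hFmem]
        refine ⟨(ht a₀).mp ha₀.1, ?_⟩
        intro hcon
        apply ha₀.2
        have h' := (ht (w - (a₀ + t))).mp hcon
        rwa [show w - (a₀ + t) + t = w - a₀ from by ring] at h'
      · intro t1 _ t2 _ hcon
        exact add_left_cancel hcon
    calc m.totient - 1 ≤ (m.totient - Nat.card (stabF S)) * Nat.card (stabF S) := by
          obtain ⟨d, hd⟩ : ∃ d, m.totient = Nat.card (stabF S) + d + 1 :=
            ⟨m.totient - Nat.card (stabF S) - 1, by omega⟩
          have h1 : d ≤ d * Nat.card (stabF S) := Nat.le_mul_of_pos_right d (by omega)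
          have h2' : m.totient - Nat.card (stabF S) = d + 1 := by omega
          rw [h2']
          have h3 : (d + 1) * Nat.card (stabF S) = d * Nat.card (stabF S) + Nat.card (stabF S) := by
            ring
          omega
      _ ≤ (U \ B).card * Nat.card (stabF S) := by
          apply Nat.mul_le_mul_right
          rw [Finset.card_sdiff_of_subset hBU, hU]
          omega
      _ = ∑ _w ∈ U \ B, Nat.card (stabF S) := by rw [Finset.sum_const, smul_eq_mul]
      _ ≤ ∑ w ∈ U \ B, (F w).card := Finset.sum_le_sum (fun w hw => by
          rw [Finset.mem_sdiff] at hw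
          exact hFh w hw.1 hw.2)
      _ ≤ ∑ w ∈ U, (F w).card := Finset.sum_le_sum_of_subset Finset.sdiff_subset

end General6
lemma totient_gt_proper_divisor (p₁ p₂ n₁ n₂ : ℕ) (hp₁ : p₁.Prime) (hp₂ : p₂.Prime)
    (hne : p₁ ≠ p₂) (hn₁ : 0 < n₁) (hn₂ : 0 < n₂) (h3₁ : 3 ≤ p₁) (h3₂ : 3 ≤ p₂) :
    ∀ d : ℕ, d ∣ p₁ ^ n₁ * p₂ ^ n₂ → d ≠ p₁ ^ n₁ * p₂ ^ n₂ →
      d < (p₁ ^ n₁ * p₂ ^ n₂).totient := by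
  obtain ⟨k₁, rfl⟩ : ∃ k, n₁ = k + 1 := ⟨n₁ - 1, by omega⟩
  obtain ⟨k₂, rfl⟩ : ∃ k, n₂ = k + 1 := ⟨n₂ - 1, by omega⟩
  set m := p₁ ^ (k₁ + 1) * p₂ ^ (k₂ + 1) with hm
  have hm0 : 0 < m := Nat.mul_pos (pow_pos hp₁.pos _) (pow_pos hp₂.pos _)
  have hφ : m.totient = (p₁ ^ k₁ * (p₁ - 1)) * (p₂ ^ k₂ * (p₂ - 1)) := by
    rw [hm, Nat.totient_mul (Nat.Coprime.pow _ _ ((Nat.coprime_primes hp₁ hp₂).mpr hne)),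
      Nat.totient_prime_pow hp₁ hn₁, Nat.totient_prime_pow hp₂ hn₂]
    simp
  have hK : 0 < p₁ ^ k₁ * p₂ ^ k₂ := Nat.mul_pos (pow_pos hp₁.pos _) (pow_pos hp₂.pos _)
  have hmul : ∀ a : ℕ, a < (p₁ - 1) * (p₂ - 1) →
      p₁ ^ k₁ * p₂ ^ k₂ * a < m.totient := by
    intro a ha
    rw [hφ, show (p₁ ^ k₁ * (p₁ - 1)) * (p₂ ^ k₂ * (p₂ - 1))
      = p₁ ^ k₁ * p₂ ^ k₂ * ((p₁ - 1) * (p₂ - 1)) from by ring]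
    exact Nat.mul_lt_mul_of_le_of_lt (le_refl _) ha hK
  have key₁ : m / p₁ < m.totient := by
    have hq1 : m / p₁ = p₁ ^ k₁ * p₂ ^ k₂ * p₂ := by
      rw [hm, show p₁ ^ (k₁ + 1) * p₂ ^ (k₂ + 1) = p₁ * (p₁ ^ k₁ * p₂ ^ k₂ * p₂) from by ring,
        Nat.mul_div_cancel_left _ (by omega : 0 < p₁)]
    rw [hq1]
    refine hmul p₂ ?_
    calc p₂ < 2 * (p₂ - 1) := by omega
      _ ≤ (p₁ - 1) * (p₂ - 1) := Nat.mul_le_mul_right _ (by omega)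
  have key₂ : m / p₂ < m.totient := by
    have hq2 : m / p₂ = p₁ ^ k₁ * p₂ ^ k₂ * p₁ := by
      rw [hm, show p₁ ^ (k₁ + 1) * p₂ ^ (k₂ + 1) = p₂ * (p₁ ^ k₁ * p₂ ^ k₂ * p₁) from by ring,
        Nat.mul_div_cancel_left _ (by omega : 0 < p₂)]
    rw [hq2]
    refine hmul p₁ ?_
    calc p₁ < (p₁ - 1) * 2 := by omega
      _ ≤ (p₁ - 1) * (p₂ - 1) := Nat.mul_le_mul_left _ (by omega)
  intro d hdvd hne'
  have hd0 : 0 < d := Nat.pos_of_dvd_of_pos hdvd hm0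
  have hlt : d < m := lt_of_le_of_ne (Nat.le_of_dvd hm0 hdvd) hne'
  have hmd : m = d * (m / d) := (Nat.div_mul_cancel hdvd).symm ▸ (Nat.mul_div_cancel' hdvd).symm
  have h1 : m / d ≠ 1 := by
    intro hcon
    rw [hcon, mul_one] at hmd
    omega
  obtain ⟨q, hq, hqdvd⟩ : ∃ q : ℕ, q.Prime ∧ q ∣ m / d :=
    ⟨(m / d).minFac, Nat.minFac_prime h1, Nat.minFac_dvd _⟩
  have hdq : d * q ∣ m := by
    obtain ⟨k, hk⟩ := hqdvd
    exact ⟨k, by rw [hmd, hk]; ring⟩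
  have hqm : q ∣ m := hqdvd.trans (Nat.div_dvd_of_dvd hdvd)
  have hq' : q = p₁ ∨ q = p₂ := by
    rcases (Nat.Prime.dvd_mul hq).mp hqm with h | h
    · exact Or.inl ((Nat.prime_dvd_prime_iff_eq hq hp₁).mp (hq.dvd_of_dvd_pow h))
    · exact Or.inr ((Nat.prime_dvd_prime_iff_eq hq hp₂).mp (hq.dvd_of_dvd_pow h))
  have hdle : d ≤ m / q := by
    rw [Nat.le_div_iff_mul_le hq.pos]
    exact Nat.le_of_dvd hm0 hdq
  rcases hq' with rfl | rfl
  · exact lt_of_le_of_lt hdle key₁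
  · exact lt_of_le_of_lt hdle key₂


theorem unitGraph_twoPrimes_binaryCode (p₁ p₂ n₁ n₂ : ℕ)
    (hp₁ : p₁.Prime) (hp₂ : p₂.Prime) (hne : p₁ ≠ p₂)
    (hn₁ : 0 < n₁) (hn₂ : 0 < n₂)
    (h2 : IsUnit (2 : ZMod (p₁ ^ n₁ * p₂ ^ n₂))) :
    Nat.card ↥(unitGraph (p₁ ^ n₁ * p₂ ^ n₂)).edgeSet =
      (p₁ ^ n₁ * p₂ ^ n₂ - 1) * Nat.totient (p₁ ^ n₁ * p₂ ^ n₂) / 2 ∧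
    Module.finrank (ZMod 2) ↥(graphCode (ZMod 2) (unitGraph (p₁ ^ n₁ * p₂ ^ n₂))) =
      p₁ ^ n₁ * p₂ ^ n₂ - 1 ∧
    (∀ c ∈ graphCode (ZMod 2) (unitGraph (p₁ ^ n₁ * p₂ ^ n₂)), c ≠ 0 →
      Nat.totient (p₁ ^ n₁ * p₂ ^ n₂) - 1 ≤ {e | c e ≠ 0}.ncard) ∧
    (∃ c ∈ graphCode (ZMod 2) (unitGraph (p₁ ^ n₁ * p₂ ^ n₂)),
      {e | c e ≠ 0}.ncard = Nat.totient (p₁ ^ n₁ * p₂ ^ n₂) - 1) := by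
  have hm0 : 0 < p₁ ^ n₁ * p₂ ^ n₂ := Nat.mul_pos (pow_pos hp₁.pos _) (pow_pos hp₂.pos _)
  haveI : NeZero (p₁ ^ n₁ * p₂ ^ n₂) := ⟨by omega⟩
  have hodd : ¬ (2 ∣ p₁ ^ n₁ * p₂ ^ n₂) := by
    intro hdvd
    have h : Nat.Coprime 2 (p₁ ^ n₁ * p₂ ^ n₂) :=
      (ZMod.isUnit_iff_coprime 2 _).mp (by exact_mod_cast h2)
    have h' : Nat.gcd 2 (p₁ ^ n₁ * p₂ ^ n₂) = 1 := h
    have h'' := Nat.gcd_eq_left hdvd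
    omega
  have h3₁ : 3 ≤ p₁ := by
    have h2le := hp₁.two_le
    rcases Nat.lt_or_ge p₁ 3 with h | h
    · exfalso
      have hp2 : p₁ = 2 := by omega
      exact hodd (hp2 ▸ (dvd_pow_self p₁ hn₁.ne').mul_right _)
    · exact h
  have h3₂ : 3 ≤ p₂ := by
    have h2le := hp₂.two_le
    rcases Nat.lt_or_ge p₂ 3 with h | h
    · exfalso
      have hp2 : p₂ = 2 := by omega
      exact hodd (hp2 ▸ (dvd_pow_self p₂ hn₂.ne').mul_left _)
    · exact h
  have hm2 : 2 ≤ p₁ ^ n₁ * p₂ ^ n₂ := by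
    have ha : 3 ≤ p₁ ^ n₁ := le_trans h3₁ (Nat.le_self_pow hn₁.ne' _)
    have hb : 1 ≤ p₂ ^ n₂ := pow_pos hp₂.pos _
    calc 2 ≤ 3 * 1 := by omega
      _ ≤ p₁ ^ n₁ * p₂ ^ n₂ := Nat.mul_le_mul ha hb
  exact ⟨card_edges_unitGraph h2, finrank_graphCode hm2 h2,
    min_weight h2 (totient_gt_proper_divisor p₁ p₂ n₁ n₂ hp₁ hp₂ hne hn₁ hn₂ h3₁ h3₂),
    exists_min_codeword h2⟩
end
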